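/- Let G be a regular D-dimensional lattice with n nodes, B a matrix with |B_{ij}| ≤ C q^{d(i,j)} (0 < q < 1, d the lattice graph distance), and use the distance-d coloring col(w) = ∑_k (w^{[k]} mod (d+1))(d+1)^k + 1 whose color classes form sub-lattices with node distances that are multiples of d+1 ≥ d. Then the probing trace estimate satisfies |tr(B) − ∑_ℓ v_ℓᴴ B v_ℓ| ≤ 2·C·D·n·∑_{δ=1}^∞ δ^{D−1} q^{δd} = 2CDn·Li_{1−D}(q^d). -/

import Mathlib

/-!
The error of the probing estimate consists of the entries `B i j` with `i ≠ j` in the same colour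
class. Equal colours force `i ≡ j (mod d + 1)` coordinatewise, so `i - j = (d + 1) • a` with
`a ∈ ℤ^D \ {0}` and `q ^ ‖i - j‖₁ ≤ (q ^ d) ^ ‖a‖₁`. Summing over `a` needs only the level-set
bound `#{a ∈ ℤ^D | ‖a‖₁ = m} ≤ 2 D m ^ (D - 1)`, proved by induction on `D` by slicing along the
first coordinate.
-/

open Finset Matrix

section L1Sphere

variable {D : ℕ}

def l1Norm (a : Fin D → ℤ) : ℕ := ∑ k, (a k).natAbs

lemma natAbs_le_l1Norm (a : Fin D → ℤ) (k : Fin D) : (a k).natAbs ≤ l1Norm a :=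
  single_le_sum (f := fun k => (a k).natAbs) (fun _ _ => Nat.zero_le _) (mem_univ k)

lemma l1Norm_eq_zero {a : Fin D → ℤ} : l1Norm a = 0 ↔ a = 0 := by
  simp [l1Norm, sum_eq_zero_iff, funext_iff]

lemma l1Norm_cons (x : ℤ) (a : Fin D → ℤ) :
    l1Norm (Fin.cons x a : Fin (D + 1) → ℤ) = x.natAbs + l1Norm a :=
  Fin.sum_univ_succ _

lemma l1Norm_smul (c : ℤ) (a : Fin D → ℤ) : l1Norm (c • a) = c.natAbs * l1Norm a := by
  simp [l1Norm, Int.natAbs_mul, mul_sum]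

noncomputable def l1Sphere (D m : ℕ) : Finset (Fin D → ℤ) :=
  {a ∈ Fintype.piFinset fun _ => Icc (-(m : ℤ)) m | l1Norm a = m}

lemma mem_l1Sphere {m : ℕ} {a : Fin D → ℤ} : a ∈ l1Sphere D m ↔ l1Norm a = m := by
  refine ⟨fun h => (mem_filter.1 h).2, fun h => mem_filter.2 ⟨?_, h⟩⟩
  refine Fintype.mem_piFinset.2 fun k => mem_Icc.2 ?_
  have := natAbs_le_l1Norm a k
  omega

lemma l1Sphere_zero : l1Sphere D 0 = {0} := by
  ext a
  rw [mem_l1Sphere, l1Norm_eq_zero, mem_singleton]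

lemma card_filter_l1Sphere_natAbs_le (m s : ℕ) :
    #{a ∈ l1Sphere (D + 1) m | (a 0).natAbs = s} ≤
      #({(s : ℤ), -(s : ℤ)} : Finset ℤ) * #(l1Sphere D (m - s)) := by
  rw [← card_product]
  refine (card_le_card fun a ha => ?_).trans
    (card_image_le (f := fun p : ℤ × (Fin D → ℤ) => (Fin.cons p.1 p.2 : Fin (D + 1) → ℤ)))
  obtain ⟨haS, rfl⟩ := mem_filter.1 ha
  refine mem_image.2
    ⟨(a 0, Fin.tail a), mem_product.2 ⟨?_, mem_l1Sphere.2 ?_⟩, Fin.cons_self_tail a⟩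
  · rw [mem_insert, mem_singleton]
    exact Int.natAbs_eq (a 0)
  · have hcons : l1Norm a = (a 0).natAbs + l1Norm (Fin.tail a) := by
      conv_lhs => rw [← Fin.cons_self_tail a]
      exact l1Norm_cons _ _
    rw [mem_l1Sphere.1 haS] at hcons
    change l1Norm (Fin.tail a) = _
    omega

lemma card_l1Sphere_succ_le (m : ℕ) :
    #(l1Sphere (D + 1) m) ≤ #(l1Sphere D m) + 2 * ∑ u ∈ range m, #(l1Sphere D u) := by
  have hmaps : Set.MapsTo (fun a : Fin (D + 1) → ℤ => (a 0).natAbs) (l1Sphere (D + 1) m)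
      (range (m + 1)) := fun a ha => by
    have := natAbs_le_l1Norm a 0
    rw [mem_l1Sphere.1 ha] at this
    simpa [Nat.lt_succ_iff] using this
  calc #(l1Sphere (D + 1) m)
      = ∑ s ∈ range (m + 1), #{a ∈ l1Sphere (D + 1) m | (a 0).natAbs = s} :=
        card_eq_sum_card_fiberwise hmaps
    _ ≤ ∑ s ∈ range (m + 1), #({(s : ℤ), -(s : ℤ)} : Finset ℤ) * #(l1Sphere D (m - s)) :=
        sum_le_sum fun s _ => card_filter_l1Sphere_natAbs_le m s
    _ ≤ ∑ s ∈ range m, 2 * #(l1Sphere D (m - 1 - s)) + #(l1Sphere D m) := by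
        rw [sum_range_succ']
        gcongr with s
        · exact card_le_two
        · rw [Nat.sub_sub, add_comm 1]
        · simp
    _ = #(l1Sphere D m) + 2 * ∑ u ∈ range m, #(l1Sphere D u) := by
        rw [← mul_sum, sum_range_reflect (fun u => #(l1Sphere D u)), add_comm]

lemma pow_pred_add_succ_pow_pred_le (D u : ℕ) :
    D * u ^ (D - 1) + D * (u + 1) ^ (D - 1) + (D + 1) * u ^ D ≤ (D + 1) * (u + 1) ^ D := by
  have bernoulli := pow_add_mul_le_add_pow (a := u) (b := 1) (Nat.zero_le _) (by omega) D
  have hstep : D * ((u + 1) ^ (D - 1) + u ^ D) ≤ D * (u + 1) ^ D := by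
    rcases D with _ | D
    · simp
    · gcongr
      rw [Nat.add_sub_cancel, pow_succ, pow_succ, mul_add_one, add_comm]
      gcongr
      omega
  nlinarith

lemma mul_pow_pred_add_sum_ite_le (D : ℕ) {m : ℕ} (hm : 1 ≤ m) :
    D * m ^ (D - 1) + ∑ u ∈ range m, (if u = 0 then 1 else 2 * D * u ^ (D - 1)) ≤
      (D + 1) * m ^ D := by
  induction m, hm using Nat.le_induction with
  | base => simp
  | succ m hm ih =>
    rw [sum_range_succ, if_neg (by omega)]
    have := pow_pred_add_succ_pow_pred_le D m
    nlinarith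

theorem card_l1Sphere_le (D : ℕ) {m : ℕ} (hm : 1 ≤ m) :
    #(l1Sphere D m) ≤ 2 * D * m ^ (D - 1) := by
  induction D generalizing m with
  | zero =>
    have : l1Sphere 0 m = ∅ := eq_empty_of_forall_notMem fun a ha => by
      have := mem_l1Sphere.1 ha
      simp [l1Norm] at this
      omega
    simp [this]
  | succ D ih =>
    have hle : ∀ u, #(l1Sphere D u) ≤ if u = 0 then 1 else 2 * D * u ^ (D - 1) := fun u => by
      split_ifs with hu
      · simp [hu, l1Sphere_zero]
      · exact ih (by omega)
    calc #(l1Sphere (D + 1) m)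
        ≤ #(l1Sphere D m) + 2 * ∑ u ∈ range m, #(l1Sphere D u) := card_l1Sphere_succ_le m
      _ ≤ 2 * D * m ^ (D - 1) +
            2 * ∑ u ∈ range m, (if u = 0 then 1 else 2 * D * u ^ (D - 1)) := by
          gcongr with u
          · exact ih hm
          · exact hle u
      _ ≤ 2 * (D + 1) * m ^ (D + 1 - 1) := by
          have := mul_pow_pred_add_sum_ite_le D hm
          rw [Nat.add_sub_cancel]
          linarith

end L1Sphere

lemma summable_succ_pow_mul_geometric (D : ℕ) {r : ℝ} (hr0 : 0 ≤ r) (hr1 : r < 1) :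
    Summable fun δ : ℕ => ((δ : ℝ) + 1) ^ D * r ^ (δ + 1) := by
  have := (summable_nat_add_iff 1).2 <| summable_pow_mul_geometric_of_norm_lt_one D
    (r := r) (by rwa [Real.norm_of_nonneg hr0])
  simpa only [Nat.cast_add, Nat.cast_one] using this

theorem sum_pow_l1Norm_le {D : ℕ} {r : ℝ} (hr0 : 0 ≤ r) (hr1 : r < 1)
    (A : Finset (Fin D → ℤ)) (hA : 0 ∉ A) :
    ∑ a ∈ A, r ^ l1Norm a ≤ 2 * D * ∑' δ : ℕ, ((δ : ℝ) + 1) ^ (D - 1) * r ^ (δ + 1) := by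
  have hpos : ∀ a ∈ A, 1 ≤ l1Norm a := fun a ha =>
    Nat.one_le_iff_ne_zero.2 fun h => hA (l1Norm_eq_zero.1 h ▸ ha)
  have hfiber : ∀ δ, #{a ∈ A | l1Norm a - 1 = δ} ≤ 2 * D * (δ + 1) ^ (D - 1) := fun δ =>
    (card_le_card fun a ha => by
      obtain ⟨haA, rfl⟩ := mem_filter.1 ha
      exact mem_l1Sphere.2 (by have := hpos a haA; omega)).trans
      (card_l1Sphere_le D (Nat.succ_pos δ))
  calc ∑ a ∈ A, r ^ l1Norm a = ∑ a ∈ A, r ^ ((l1Norm a - 1) + 1) :=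
        sum_congr rfl fun a ha => by rw [Nat.sub_add_cancel (hpos a ha)]
    _ = ∑ δ ∈ A.image (l1Norm · - 1), #{a ∈ A | l1Norm a - 1 = δ} • r ^ (δ + 1) :=
        sum_comp (fun δ => r ^ (δ + 1)) _
    _ ≤ ∑ δ ∈ A.image (l1Norm · - 1), (2 * D * (δ + 1) ^ (D - 1) : ℕ) • r ^ (δ + 1) := by
        gcongr with δ
        exact hfiber δ
    _ = 2 * D * ∑ δ ∈ A.image (l1Norm · - 1), ((δ : ℝ) + 1) ^ (D - 1) * r ^ (δ + 1) := by
        simp only [nsmul_eq_mul, mul_sum]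
        push_cast
        ring_nf
    _ ≤ 2 * D * ∑' δ : ℕ, ((δ : ℝ) + 1) ^ (D - 1) * r ^ (δ + 1) := by
        gcongr
        exact (summable_succ_pow_mul_geometric _ hr0 hr1).sum_le_tsum _
          fun δ _ => by positivity

theorem sum_pow_l1Norm_sub_le {ι : Type*} {D d : ℕ} (hd : 1 ≤ d) {q : ℝ} (hq0 : 0 ≤ q)
    (hq1 : q < 1) (e : ι → Fin D → ℤ) (he : Function.Injective e) (i : ι) (F : Finset ι)
    (hF : ∀ j ∈ F, j ≠ i ∧ ∀ k, ((d + 1 : ℕ) : ℤ) ∣ e i k - e j k) :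
    ∑ j ∈ F, q ^ l1Norm (e i - e j) ≤
      2 * D * ∑' δ : ℕ, ((δ : ℝ) + 1) ^ (D - 1) * (q ^ d) ^ (δ + 1) := by
  classical
  set c : ℤ := ((d + 1 : ℕ) : ℤ)
  set φ : ι → Fin D → ℤ := fun j k => (e i k - e j k) / c
  have hφ : ∀ j ∈ F, e i - e j = c • φ j := fun j hj =>
    funext fun k => (Int.mul_ediv_cancel' ((hF j hj).2 k)).symm
  have hinj : Set.InjOn φ F := fun j hj j' hj' h => he <| by
    have := hφ j hj
    rw [h, ← hφ j' hj'] at this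
    simpa using this
  have h0 : (0 : Fin D → ℤ) ∉ F.image φ := fun h => by
    obtain ⟨j, hj, hj0⟩ := mem_image.1 h
    have := hφ j hj
    rw [hj0, smul_zero, sub_eq_zero] at this
    exact (hF j hj).1 (he this).symm
  calc ∑ j ∈ F, q ^ l1Norm (e i - e j) ≤ ∑ j ∈ F, (q ^ d) ^ l1Norm (φ j) := by
        refine sum_le_sum fun j hj => ?_
        rw [hφ j hj, l1Norm_smul, Int.natAbs_natCast, ← pow_mul]
        exact pow_le_pow_of_le_one hq0 hq1.le (Nat.mul_le_mul_right _ (Nat.le_succ d))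
    _ = ∑ a ∈ F.image φ, (q ^ d) ^ l1Norm a :=
        (sum_image (f := fun a => (q ^ d) ^ l1Norm a) hinj).symm
    _ ≤ _ := sum_pow_l1Norm_le (pow_nonneg hq0 d) (pow_lt_one₀ hq0 hq1 (by omega)) _ h0

lemma sum_mod_mul_pow_eq_finFunctionFinEquiv {D : ℕ} (b : ℕ) [NeZero b] (x : Fin D → ℕ) :
    ∑ k, x k % b * b ^ (k : ℕ) = finFunctionFinEquiv (fun k => Fin.ofNat b (x k)) :=
  rfl

lemma sum_mod_mul_pow_lt {D : ℕ} (b : ℕ) [NeZero b] (x : Fin D → ℕ) :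
    ∑ k, x k % b * b ^ (k : ℕ) < b ^ D := by
  rw [sum_mod_mul_pow_eq_finFunctionFinEquiv]
  exact Fin.is_lt _

lemma modEq_of_sum_mod_mul_pow_eq {D b : ℕ} [NeZero b] {x y : Fin D → ℕ}
    (h : ∑ k, x k % b * b ^ (k : ℕ) = ∑ k, y k % b * b ^ (k : ℕ)) (k : Fin D) :
    x k ≡ y k [MOD b] := by
  rw [sum_mod_mul_pow_eq_finFunctionFinEquiv, sum_mod_mul_pow_eq_finFunctionFinEquiv,
    Fin.val_inj, finFunctionFinEquiv.apply_eq_iff_eq] at h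
  simpa [Nat.ModEq, Fin.val_ofNat] using congrArg Fin.val (congrFun h k)

section Probing

variable {ι R : Type*} [Fintype ι]

def probingVector [Zero R] [One R] (col : ι → ℕ) (ℓ : ℕ) : ι → R :=
  fun w => if col w = ℓ then 1 else 0

lemma star_probingVector_dotProduct_mulVec [NonAssocSemiring R] [StarRing R]
    (B : Matrix ι ι R) (col : ι → ℕ) (ℓ : ℕ) :
    star (probingVector col ℓ) ⬝ᵥ B *ᵥ probingVector col ℓ =
      ∑ i with col i = ℓ, ∑ j with col j = ℓ, B i j := by
  simp [probingVector, dotProduct, Matrix.mulVec, sum_filter, apply_ite star]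

theorem trace_sub_sum_probing [DecidableEq ι] [Ring R] [StarRing R] (B : Matrix ι ι R)
    (col : ι → ℕ) {P : ℕ} (hcol : ∀ i, col i < P) :
    B.trace - ∑ ℓ ∈ range P, star (probingVector col ℓ) ⬝ᵥ B *ᵥ probingVector col ℓ =
      -∑ i, ∑ j ∈ ({j | col j = col i} : Finset ι).erase i, B i j := by
  have hprobe : ∑ ℓ ∈ range P, star (probingVector col ℓ) ⬝ᵥ B *ᵥ probingVector col ℓ =
      ∑ i, ∑ j with col j = col i, B i j := by
    simp_rw [star_probingVector_dotProduct_mulVec]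
    rw [← sum_fiberwise_of_maps_to (g := col) fun i _ => mem_range.2 (hcol i)]
    exact sum_congr rfl fun ℓ _ => sum_congr rfl fun i hi => by rw [(mem_filter.1 hi).2]
  rw [hprobe, Matrix.trace, ← sum_neg_distrib, ← sum_sub_distrib]
  refine sum_congr rfl fun i _ => ?_
  rw [← add_sum_erase (s := ({j | col j = col i} : Finset ι)) (a := i) (fun j => B i j)
    (by simp)]
  simp

end Probing

open Matrix in
theorem probing_trace_lattice_general (D d : ℕ) (hd : 1 ≤ d)
    (N : Fin D → ℕ)
    (B : Matrix (∀ k : Fin D, Fin (N k)) (∀ k : Fin D, Fin (N k)) ℂ)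
    (C q : ℝ) (hC : 0 < C) (hq0 : 0 < q) (hq1 : q < 1)
    (hdecay : ∀ i j : ∀ k : Fin D, Fin (N k),
      ‖B i j‖ ≤ C * q ^ (∑ k, ((i k : ℤ) - (j k : ℤ)).natAbs))
    (col : (∀ k : Fin D, Fin (N k)) → ℕ)
    (hcol : ∀ w, col w = ∑ k, ((w k : ℕ) % (d + 1)) * (d + 1) ^ (k : ℕ))
    (v : ℕ → (∀ k : Fin D, Fin (N k)) → ℂ)
    (hv : ∀ (ℓ : ℕ) (w : ∀ k : Fin D, Fin (N k)),
      v ℓ w = if col w = ℓ then 1 else 0) :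
    ‖B.trace -
        ∑ ℓ ∈ Finset.range ((d + 1) ^ D), (star (v ℓ)) ⬝ᵥ B.mulVec (v ℓ)‖ ≤
      2 * C * (D : ℝ) * (Fintype.card (∀ k : Fin D, Fin (N k)) : ℝ) *
        ∑' δ : ℕ, ((δ : ℝ) + 1) ^ (D - 1) * (q ^ d) ^ (δ + 1) := by
  classical
  set S := ∑' δ : ℕ, ((δ : ℝ) + 1) ^ (D - 1) * (q ^ d) ^ (δ + 1)
  let e : (∀ k : Fin D, Fin (N k)) → Fin D → ℤ := fun w k => w k
  have he : Function.Injective e := fun w w' h =>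
    funext fun k => Fin.ext (by simpa [e] using congrFun h k)
  obtain rfl : v = probingVector col := funext fun ℓ => funext (hv ℓ)
  have hcol_lt : ∀ w, col w < (d + 1) ^ D := fun w => hcol w ▸ sum_mod_mul_pow_lt _ _
  have hdvd : ∀ i j, col j = col i → ∀ k, ((d + 1 : ℕ) : ℤ) ∣ e i k - e j k := fun i j h k =>
    Nat.modEq_iff_dvd.1 <| modEq_of_sum_mod_mul_pow_eq (x := fun k => j k) (y := fun k => i k)
      ((hcol j).symm.trans (h.trans (hcol i))) k
  have hclass : ∀ i, ∑ j ∈ ({j | col j = col i} : Finset _).erase i, ‖B i j‖ ≤ C * (2 * D * S) :=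
    fun i => calc
      _ ≤ ∑ j ∈ ({j | col j = col i} : Finset _).erase i, C * q ^ l1Norm (e i - e j) :=
        sum_le_sum fun j _ => hdecay i j
      _ ≤ C * (2 * D * S) := by
        rw [← mul_sum]
        refine mul_le_mul_of_nonneg_left (sum_pow_l1Norm_sub_le hd hq0.le hq1 e he i _
          fun j hj => ?_) hC.le
        obtain ⟨hji, hj⟩ := mem_erase.1 hj
        exact ⟨hji, hdvd i j (mem_filter.1 hj).2⟩
  rw [trace_sub_sum_probing B col hcol_lt, norm_neg]
  calc _ ≤ ∑ i, ∑ j ∈ ({j | col j = col i} : Finset _).erase i, ‖B i j‖ :=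
        (norm_sum_le _ _).trans (sum_le_sum fun i _ => norm_sum_le _ _)
    _ ≤ ∑ _i : ∀ k : Fin D, Fin (N k), C * (2 * D * S) := sum_le_sum fun i _ => hclass i
    _ = _ := by rw [sum_const, card_univ, nsmul_eq_mul]; ring

open Matrix in
/-- Let `G` be the regular `D`-dimensional lattice on
`{0,…,N₁-1} × ⋯ × {0,…,N_D-1}` with `n` nodes, whose graph distance is the
1-norm distance, let `B` satisfy `|B_{ij}| ≤ C·q^{d(i,j)}` (`0 < q < 1`), and
use the distance-`d` coloring `col(w) = ∑_k (w^[k] mod (d+1))·(d+1)^k + 1`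
(0-based: without the `+1`), whose classes are the fibers of `col`. Then the
probing trace estimate satisfies
`|tr(B) − ∑_ℓ v_ℓᴴ B v_ℓ| ≤ 2·C·D·n·∑_{δ=1}^∞ δ^{D−1} q^{δd} = 2CDn·Li_{1−D}(q^d)`. -/
theorem probing_trace_lattice (D d : ℕ) (hD : 1 ≤ D) (hd : 1 ≤ d)
    (N : Fin D → ℕ)
    (B : Matrix (∀ k : Fin D, Fin (N k)) (∀ k : Fin D, Fin (N k)) ℂ)
    (C q : ℝ) (hC : 0 < C) (hq0 : 0 < q) (hq1 : q < 1)
    (hdecay : ∀ i j : ∀ k : Fin D, Fin (N k),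
      ‖B i j‖ ≤ C * q ^ (∑ k, ((i k : ℤ) - (j k : ℤ)).natAbs))
    (col : (∀ k : Fin D, Fin (N k)) → ℕ)
    (hcol : ∀ w, col w = ∑ k, ((w k : ℕ) % (d + 1)) * (d + 1) ^ (k : ℕ))
    (v : ℕ → (∀ k : Fin D, Fin (N k)) → ℂ)
    (hv : ∀ (ℓ : ℕ) (w : ∀ k : Fin D, Fin (N k)),
      v ℓ w = if col w = ℓ then 1 else 0) :
    ‖B.trace -
        ∑ ℓ ∈ Finset.range ((d + 1) ^ D), (star (v ℓ)) ⬝ᵥ B.mulVec (v ℓ)‖ ≤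
      2 * C * (D : ℝ) * (Fintype.card (∀ k : Fin D, Fin (N k)) : ℝ) *
        ∑' δ : ℕ, ((δ : ℝ) + 1) ^ (D - 1) * (q ^ d) ^ (δ + 1) :=
  probing_trace_lattice_general D d hd N B C q hC hq0 hq1 hdecay col hcol v hv
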